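/- arXiv:1806.04519 — 5 statements merged into one kernel-verified Lean document; each statement's English description precedes it below -/
import Mathlib

section
/- Let r > 0, k ∈ (0,1), μ ∈ M_{2r}, and let D : C_r → ℝ^d satisfy D(0) = 0 and |D(φ)|² ≤ k² ∫_{−∞}^0 |φ(θ)|² μ(dθ) for all φ ∈ C_r. Let x : ℝ → ℝ^d be continuous with x₀ ∈ C_r (so that x_s ∈ C_r for every s ≥ 0). Then for every t > 0, sup_{0 < s ≤ t} |x(s)|² ≤ k₁ ‖x₀‖_r² + k₂ sup_{0 < s ≤ t} |x(s) − D(x_s)|², where k₁ = k μ^{(2r)} / (1 − k) and k₂ = 1/(1 − k)². -/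
open MeasureTheory

noncomputable section

/-- `ℝ^d` with the Euclidean norm. -/
abbrev E (d : ℕ) := EuclideanSpace ℝ (Fin d)

/-- `φ ∈ C_r`: `φ` is continuous on `(-∞,0]` and `sup_{θ ≤ 0} e^{rθ}|φ(θ)| < ∞`. -/
def MemCr (d : ℕ) (r : ℝ) (φ : ℝ → E d) : Prop :=
  ContinuousOn φ (Set.Iic 0) ∧
    BddAbove (Set.range fun θ : Set.Iic (0 : ℝ) => Real.exp (r * θ.1) * ‖φ θ.1‖)

/-- `‖φ‖_r = sup_{θ ≤ 0} e^{rθ}|φ(θ)|`. -/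
def crNorm (d : ℕ) (r : ℝ) (φ : ℝ → E d) : ℝ :=
  ⨆ θ : Set.Iic (0 : ℝ), Real.exp (r * θ.1) * ‖φ θ.1‖

/-- `μ^{(s)} = ∫_{(-∞,0]} e^{-sθ} μ(dθ)`. -/
def muExp (μ : Measure ℝ) (s : ℝ) : ℝ :=
  ∫ θ in Set.Iic (0 : ℝ), Real.exp (-s * θ) ∂μ

/-- `μ ∈ M_s`: `μ` is a probability measure on `(-∞,0]` with `μ^{(s)} < ∞`
(expressed as integrability of `θ ↦ e^{-sθ}` on `(-∞,0]`). -/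
def MemM (μ : Measure ℝ) (s : ℝ) : Prop :=
  IsProbabilityMeasure μ ∧ μ (Set.Ioi 0) = 0 ∧
    IntegrableOn (fun θ => Real.exp (-s * θ)) (Set.Iic 0) μ

/-- Weighted Cauchy inequality: `(a+b)² ≤ a²/(1-k) + b²/k`. -/
lemma weighted_sq_add_le (a b k : ℝ) (hk0 : 0 < k) (hk1 : k < 1) :
    (a + b) ^ 2 ≤ a ^ 2 / (1 - k) + b ^ 2 / k := by
  have h1 : (0:ℝ) < 1 - k := by linarith
  rw [div_add_div _ _ h1.ne' hk0.ne', le_div_iff₀ (by positivity)]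
  nlinarith [sq_nonneg (k * a - (1 - k) * b)]

set_option maxHeartbeats 1000000 in
/-- Lemma `Lf1` of the paper: if `D(0) = 0` and
`|D(φ)|² ≤ k² ∫ |φ(θ)|² μ(dθ)` on `C_r`, and `x : ℝ → ℝ^d` is continuous with
`x₀ ∈ C_r`, then for every `t > 0`,
`sup_{0 < s ≤ t} |x(s)|² ≤ k₁ ‖x₀‖_r² + k₂ sup_{0 < s ≤ t} |x(s) - D(x_s)|²`, where
`k₁ = k μ^{(2r)}/(1-k)` and `k₂ = 1/(1-k)²`. Here `x_s(θ) = x(s + θ)`. -/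
theorem sup_sq_le_of_neutral (d : ℕ) (hd : 1 ≤ d) (r k : ℝ) (hr : 0 < r)
    (hk : k ∈ Set.Ioo (0 : ℝ) 1) (μ : Measure ℝ) (hμ : MemM μ (2 * r))
    (D : (ℝ → E d) → E d) (hD0 : D 0 = 0)
    (hD : ∀ φ : ℝ → E d, MemCr d r φ →
      ‖D φ‖ ^ 2 ≤ k ^ 2 * ∫ θ in Set.Iic (0 : ℝ), ‖φ θ‖ ^ 2 ∂μ)
    (x : ℝ → E d) (hx : Continuous x) (hx0 : MemCr d r x)
    (t : ℝ) (ht : 0 < t) :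
    (⨆ s : Set.Ioc (0 : ℝ) t, ‖x s.1‖ ^ 2) ≤
      k * muExp μ (2 * r) / (1 - k) * crNorm d r x ^ 2 +
      1 / (1 - k) ^ 2 * ⨆ s : Set.Ioc (0 : ℝ) t, ‖x s.1 - D (fun θ => x (s.1 + θ))‖ ^ 2 := by
  obtain ⟨hk0, hk1⟩ := hk
  haveI := hμ.1
  have h1k : (0:ℝ) < 1 - k := by linarith
  set N := crNorm d r x with hNdef
  set M := muExp μ (2 * r) with hMdef
  set S := ⨆ s : Set.Ioc (0 : ℝ) t, ‖x s.1‖ ^ 2 with hSdef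
  set H := ⨆ s : Set.Ioc (0 : ℝ) t, ‖x s.1 - D (fun θ => x (s.1 + θ))‖ ^ 2 with hHdef
  have htmem : (t : ℝ) ∈ Set.Ioc (0:ℝ) t := ⟨ht, le_refl t⟩
  haveI : Nonempty (Set.Ioc (0:ℝ) t) := ⟨⟨t, htmem⟩⟩
  -- bound on the compact interval [0, t]
  obtain ⟨C, hC⟩ := isCompact_Icc.exists_bound_of_continuousOn
    (s := Set.Icc (0:ℝ) t) hx.continuousOn
  have hC0 : 0 ≤ C := le_trans (norm_nonneg _) (hC 0 ⟨le_refl 0, ht.le⟩)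
  -- the crNorm bound
  have hNb : ∀ θ : ℝ, θ ≤ 0 → Real.exp (r * θ) * ‖x θ‖ ≤ N :=
    fun θ hθ => le_ciSup hx0.2 (⟨θ, hθ⟩ : Set.Iic (0:ℝ))
  have hN0 : 0 ≤ N := le_trans (by positivity) (hNb 0 le_rfl)
  -- M ≥ 0
  have hM0 : 0 ≤ M := by
    apply integral_nonneg
    intro θ; positivity
  -- BddAbove for S
  have hSb : BddAbove (Set.range fun s : Set.Ioc (0:ℝ) t => ‖x s.1‖ ^ 2) := by
    refine ⟨C ^ 2, ?_⟩
    rintro _ ⟨s, rfl⟩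
    have hs : ‖x s.1‖ ≤ C := hC s.1 ⟨s.2.1.le, s.2.2⟩
    exact pow_le_pow_left₀ (norm_nonneg _) hs 2
  have hS0 : 0 ≤ S := le_trans (by positivity) (le_ciSup hSb ⟨t, htmem⟩)
  have hSle : ∀ s : ℝ, s ∈ Set.Ioc (0:ℝ) t → ‖x s‖ ^ 2 ≤ S :=
    fun s hs => le_ciSup hSb (⟨s, hs⟩ : Set.Ioc (0:ℝ) t)
  -- x_s ∈ C_r for s ∈ (0, t]
  have hxs_mem : ∀ s : ℝ, s ∈ Set.Ioc (0:ℝ) t → MemCr d r (fun θ => x (s + θ)) := by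
    intro s hs
    constructor
    · exact (hx.comp (continuous_const.add continuous_id)).continuousOn
    · refine ⟨max N C, ?_⟩
      rintro _ ⟨θ, rfl⟩
      rcases le_or_gt (s + θ.1) 0 with h | h
      · refine le_trans ?_ (le_max_left N C)
        have h1 : Real.exp (r * θ.1) ≤ Real.exp (r * (s + θ.1)) := by
          apply Real.exp_le_exp.2
          nlinarith [hs.1, hr]
        calc Real.exp (r * θ.1) * ‖x (s + θ.1)‖
            ≤ Real.exp (r * (s + θ.1)) * ‖x (s + θ.1)‖ :=
              mul_le_mul_of_nonneg_right h1 (norm_nonneg _)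
          _ ≤ N := hNb _ h
      · refine le_trans ?_ (le_max_right N C)
        have h2 : Real.exp (r * θ.1) ≤ 1 := by
          apply Real.exp_le_one_iff.2
          have := θ.2
          simp only [Set.mem_Iic] at this
          nlinarith
        have h3 : ‖x (s + θ.1)‖ ≤ C := by
          apply hC
          constructor
          · linarith
          · have := θ.2; simp only [Set.mem_Iic] at this
            linarith [hs.2]
        calc Real.exp (r * θ.1) * ‖x (s + θ.1)‖ ≤ 1 * ‖x (s + θ.1)‖ :=
              mul_le_mul_of_nonneg_right h2 (norm_nonneg _)
          _ ≤ C := by rw [one_mul]; exact h3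
  -- pointwise bound
  have hpt : ∀ s : ℝ, s ∈ Set.Ioc (0:ℝ) t → ∀ θ : ℝ, θ ≤ 0 →
      ‖x (s + θ)‖ ^ 2 ≤ S + N ^ 2 * Real.exp (-(2 * r) * θ) := by
    intro s hs θ hθ
    rcases le_or_gt (s + θ) 0 with h | h
    · have h1 : ‖x (s + θ)‖ ≤ Real.exp (-(r * (s + θ))) * N := by
        calc ‖x (s + θ)‖
            = Real.exp (-(r * (s + θ))) * (Real.exp (r * (s + θ)) * ‖x (s + θ)‖) := by
              rw [← mul_assoc, ← Real.exp_add]; simp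
          _ ≤ Real.exp (-(r * (s + θ))) * N :=
              mul_le_mul_of_nonneg_left (hNb _ h) (Real.exp_pos _).le
      have h2 : ‖x (s + θ)‖ ^ 2 ≤ (Real.exp (-(r * (s + θ))) * N) ^ 2 :=
        pow_le_pow_left₀ (norm_nonneg _) h1 2
      have h3 : (Real.exp (-(r * (s + θ))) * N) ^ 2
          ≤ N ^ 2 * Real.exp (-(2 * r) * θ) := by
        have he : Real.exp (-(r * (s + θ))) ^ 2 = Real.exp (-(2*r) * (s + θ)) := by
          rw [sq, ← Real.exp_add]; ring_nf
        rw [mul_pow, he]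
        have : Real.exp (-(2*r) * (s + θ)) ≤ Real.exp (-(2 * r) * θ) := by
          apply Real.exp_le_exp.2; nlinarith [hs.1, hr]
        nlinarith [sq_nonneg N, Real.exp_pos (-(2*r) * (s+θ))]
      linarith
    · have h1 : ‖x (s + θ)‖ ^ 2 ≤ S := hSle _ ⟨h, by linarith [hs.2]⟩
      have h2 : 0 ≤ N ^ 2 * Real.exp (-(2 * r) * θ) := by positivity
      linarith
  -- integral bound
  have hint : ∀ s : ℝ, s ∈ Set.Ioc (0:ℝ) t →
      (∫ θ in Set.Iic (0:ℝ), ‖x (s + θ)‖ ^ 2 ∂μ) ≤ S + N ^ 2 * M := by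
    intro s hs
    have hgint : IntegrableOn (fun θ => S + N ^ 2 * Real.exp (-(2 * r) * θ))
        (Set.Iic (0:ℝ)) μ := by
      exact (integrableOn_const (measure_ne_top _ _)).add (hμ.2.2.const_mul _)
    have hfint : IntegrableOn (fun θ => ‖x (s + θ)‖ ^ 2) (Set.Iic (0:ℝ)) μ := by
      refine Integrable.mono' hgint ?_ ?_
      · exact ((hx.comp (continuous_const.add continuous_id)).norm.pow 2).aestronglyMeasurable
      · refine (ae_restrict_iff' measurableSet_Iic).2 (ae_of_all _ fun θ hθ => ?_)
        rw [Real.norm_eq_abs, abs_of_nonneg (by positivity)]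
        exact hpt s hs θ hθ
    calc (∫ θ in Set.Iic (0:ℝ), ‖x (s + θ)‖ ^ 2 ∂μ)
        ≤ ∫ θ in Set.Iic (0:ℝ), (S + N ^ 2 * Real.exp (-(2 * r) * θ)) ∂μ :=
          setIntegral_mono_on hfint hgint measurableSet_Iic (fun θ hθ => hpt s hs θ hθ)
      _ = S + N ^ 2 * M := by
          rw [integral_add (integrableOn_const (C := S) (s := Set.Iic (0:ℝ)) (μ := μ) (measure_ne_top _ _))
            (hμ.2.2.const_mul _), integral_const_mul, setIntegral_const]
          have hIic : μ (Set.Iic (0:ℝ)) = 1 := by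
            have h1 : μ (Set.Ioi (0:ℝ))ᶜ = μ Set.univ - μ (Set.Ioi (0:ℝ)) :=
              measure_compl measurableSet_Ioi (measure_ne_top μ _)
            rw [Set.compl_Ioi, hμ.2.1, measure_univ, tsub_zero] at h1
            exact h1
          rw [measureReal_def, hIic]
          simp [muExp, hMdef]
  -- D bound
  have hDb : ∀ s : ℝ, s ∈ Set.Ioc (0:ℝ) t →
      ‖D (fun θ => x (s + θ))‖ ^ 2 ≤ k ^ 2 * (S + N ^ 2 * M) := by
    intro s hs
    refine le_trans (hD _ (hxs_mem s hs)) ?_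
    exact mul_le_mul_of_nonneg_left (hint s hs) (sq_nonneg k)
  -- BddAbove for H and key facts
  have hHbdd : BddAbove (Set.range fun s : Set.Ioc (0:ℝ) t =>
      ‖x s.1 - D (fun θ => x (s.1 + θ))‖ ^ 2) := by
    refine ⟨2 * S + 2 * (k ^ 2 * (S + N ^ 2 * M)), ?_⟩
    rintro _ ⟨s, rfl⟩
    dsimp only
    have h1 : ‖x s.1 - D (fun θ => x (s.1 + θ))‖
        ≤ ‖x s.1‖ + ‖D (fun θ => x (s.1 + θ))‖ := norm_sub_le _ _
    have h2 := hSle s.1 s.2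
    have h3 := hDb s.1 s.2
    nlinarith [norm_nonneg (x s.1), norm_nonneg (D (fun θ => x (s.1 + θ))),
      sq_nonneg (‖x s.1‖ - ‖D (fun θ => x (s.1 + θ))‖),
      pow_le_pow_left₀ (norm_nonneg _) h1 2]
  have hH0 : 0 ≤ H := le_trans (by positivity) (le_ciSup hHbdd ⟨t, htmem⟩)
  -- the main estimate
  have hmain : S ≤ H / (1 - k) + k * (S + N ^ 2 * M) := by
    apply ciSup_le
    intro s
    have h1 : ‖x s.1‖ ≤ ‖x s.1 - D (fun θ => x (s.1 + θ))‖ + ‖D (fun θ => x (s.1 + θ))‖ := by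
      calc ‖x s.1‖ = ‖(x s.1 - D (fun θ => x (s.1 + θ))) + D (fun θ => x (s.1 + θ))‖ := by
            rw [sub_add_cancel]
        _ ≤ _ := norm_add_le _ _
    have h2 : ‖x s.1‖ ^ 2 ≤ (‖x s.1 - D (fun θ => x (s.1 + θ))‖
        + ‖D (fun θ => x (s.1 + θ))‖) ^ 2 := pow_le_pow_left₀ (norm_nonneg _) h1 2
    have h3 := weighted_sq_add_le ‖x s.1 - D (fun θ => x (s.1 + θ))‖
      ‖D (fun θ => x (s.1 + θ))‖ k hk0 hk1
    have h4 : ‖x s.1 - D (fun θ => x (s.1 + θ))‖ ^ 2 ≤ H := le_ciSup hHbdd s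
    have h5 := hDb s.1 s.2
    have h6 : ‖D (fun θ => x (s.1 + θ))‖ ^ 2 / k ≤ k * (S + N ^ 2 * M) := by
      rw [div_le_iff₀ hk0]
      calc ‖D (fun θ => x (s.1 + θ))‖ ^ 2 ≤ k ^ 2 * (S + N ^ 2 * M) := h5
        _ = k * (S + N ^ 2 * M) * k := by ring
    have h7 : ‖x s.1 - D (fun θ => x (s.1 + θ))‖ ^ 2 / (1 - k) ≤ H / (1 - k) := by
      gcongr
    linarith
  -- solve for S
  have key : ((1 - k) * S - k * N ^ 2 * M) * (1 - k) ≤ H := by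
    rw [← le_div_iff₀ h1k]
    linarith
  have hgoal : k * M / (1 - k) * N ^ 2 + 1 / (1 - k) ^ 2 * H
      = (k * M * N ^ 2 * (1 - k) + H) / (1 - k) ^ 2 := by
    field_simp
  rw [hgoal, le_div_iff₀ (by positivity)]
  nlinarith [key]
end
end

section
/- Let r > 0, k ∈ (0,1), μ ∈ M_{2r}, and let D : C_r → ℝ^d satisfy |D(φ) − D(ψ)|² ≤ k² ∫_{−∞}^0 |φ(θ) − ψ(θ)|² μ(dθ) for all φ, ψ ∈ C_r. Let x, y : ℝ → ℝ^d be continuous with x₀, y₀ ∈ C_r. Then for every t > 0, sup_{0 < s ≤ t} |x(s) − y(s)|² ≤ k₃ ‖x₀ − y₀‖_r² + k₄ sup_{0 < s ≤ t} |x(s) − y(s) − D(x_s) + D(y_s)|², where k₃ = k μ^{(2r)} / (1 − k) and k₄ = 1/(1 − k)². -/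
open MeasureTheory

noncomputable section

set_option maxHeartbeats 1000000 in
/-- Lemma `Lf2` of the paper: if
`|D(φ) - D(ψ)|² ≤ k² ∫ |φ(θ) - ψ(θ)|² μ(dθ)` on `C_r`, and `x, y : ℝ → ℝ^d` are continuous
with `x₀, y₀ ∈ C_r`, then for every `t > 0`,
`sup_{0 < s ≤ t} |x(s) - y(s)|² ≤ k₃ ‖x₀ - y₀‖_r² + k₄ sup_{0 < s ≤ t} |x(s) - y(s) - D(x_s) + D(y_s)|²`,
where `k₃ = k μ^{(2r)}/(1-k)` and `k₄ = 1/(1-k)²`. Here `x_s(θ) = x(s + θ)`. -/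
theorem sup_diff_sq_le_of_neutral (d : ℕ) (hd : 1 ≤ d) (r k : ℝ) (hr : 0 < r)
    (hk : k ∈ Set.Ioo (0 : ℝ) 1) (μ : Measure ℝ) (hμ : MemM μ (2 * r))
    (D : (ℝ → E d) → E d)
    (hD : ∀ φ ψ : ℝ → E d, MemCr d r φ → MemCr d r ψ →
      ‖D φ - D ψ‖ ^ 2 ≤ k ^ 2 * ∫ θ in Set.Iic (0 : ℝ), ‖φ θ - ψ θ‖ ^ 2 ∂μ)
    (x y : ℝ → E d) (hx : Continuous x) (hy : Continuous y)
    (hx0 : MemCr d r x) (hy0 : MemCr d r y)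
    (t : ℝ) (ht : 0 < t) :
    (⨆ s : Set.Ioc (0 : ℝ) t, ‖x s.1 - y s.1‖ ^ 2) ≤
      k * muExp μ (2 * r) / (1 - k) * crNorm d r (x - y) ^ 2 +
      1 / (1 - k) ^ 2 *
        ⨆ s : Set.Ioc (0 : ℝ) t,
          ‖x s.1 - y s.1 - D (fun θ => x (s.1 + θ)) + D (fun θ => y (s.1 + θ))‖ ^ 2 := by

  obtain ⟨hk0, hk1⟩ := hk
  have h1k : 0 < 1 - k := by linarith
  have hprob : IsProbabilityMeasure μ := hμ.1
  haveI : Nonempty (Set.Ioc (0:ℝ) t) := ⟨⟨t, ⟨ht, le_rfl⟩⟩⟩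
  have hIic : μ (Set.Iic (0:ℝ)) = 1 := by
    have hcompl : Set.Iic (0:ℝ) = (Set.Ioi (0:ℝ))ᶜ := by simp
    rw [hcompl, measure_compl measurableSet_Ioi (measure_ne_top μ _), hμ.2.1, measure_univ]
    simp
  set Q := crNorm d r (x - y) with hQdef
  have hQnn : 0 ≤ Q :=
    Real.iSup_nonneg fun θ => mul_nonneg (Real.exp_pos _).le (norm_nonneg _)
  -- x - y ∈ C_r
  have hzmem : MemCr d r (x - y) := by
    constructor
    · exact (hx.sub hy).continuousOn
    · obtain ⟨Bx, hBx⟩ := hx0.2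
      obtain ⟨By, hBy⟩ := hy0.2
      refine ⟨Bx + By, ?_⟩
      rintro v ⟨θ, rfl⟩
      have h1 : Real.exp (r * θ.1) * ‖x θ.1‖ ≤ Bx := hBx ⟨θ, rfl⟩
      have h2 : Real.exp (r * θ.1) * ‖y θ.1‖ ≤ By := hBy ⟨θ, rfl⟩
      have h3 : ‖(x - y) θ.1‖ ≤ ‖x θ.1‖ + ‖y θ.1‖ := norm_sub_le _ _
      calc Real.exp (r * θ.1) * ‖(x - y) θ.1‖
          ≤ Real.exp (r * θ.1) * (‖x θ.1‖ + ‖y θ.1‖) :=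
            mul_le_mul_of_nonneg_left h3 (Real.exp_pos _).le
        _ = Real.exp (r * θ.1) * ‖x θ.1‖ + Real.exp (r * θ.1) * ‖y θ.1‖ := by ring
        _ ≤ Bx + By := add_le_add h1 h2
  have hzle : ∀ u : ℝ, u ≤ 0 → ‖x u - y u‖ ≤ Q * Real.exp (-r * u) := by
    intro u hu
    have h := le_ciSup hzmem.2 (⟨u, hu⟩ : Set.Iic (0:ℝ))
    have h' : Real.exp (r * u) * ‖x u - y u‖ ≤ Q := by
      simpa [Pi.sub_apply, hQdef, crNorm] using h
    have hexp : (0:ℝ) < Real.exp (r * u) := Real.exp_pos _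
    have heq : ‖x u - y u‖ = Real.exp (-r * u) * (Real.exp (r * u) * ‖x u - y u‖) := by
      rw [← mul_assoc, ← Real.exp_add]
      simp
    rw [heq]
    calc Real.exp (-r * u) * (Real.exp (r * u) * ‖x u - y u‖)
        ≤ Real.exp (-r * u) * Q := mul_le_mul_of_nonneg_left h' (Real.exp_pos _).le
      _ = Q * Real.exp (-r * u) := mul_comm _ _
  -- segments are in C_r
  have hseg : ∀ (w : ℝ → E d), Continuous w → MemCr d r w →
      ∀ s ∈ Set.Ioc (0:ℝ) t, MemCr d r (fun θ => w (s + θ)) := by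
    intro w hw hwm s hs
    obtain ⟨B, hB⟩ := hwm.2
    obtain ⟨C, hC⟩ := isCompact_Icc.exists_bound_of_continuousOn
      (s := Set.Icc (0:ℝ) t) hw.continuousOn
    have hB0 : (0:ℝ) ≤ B :=
      le_trans (by positivity) (hB ⟨(⟨0, Set.self_mem_Iic⟩ : Set.Iic (0:ℝ)), rfl⟩)
    have hC0 : (0:ℝ) ≤ C := le_trans (norm_nonneg _) (hC 0 ⟨le_refl 0, ht.le⟩)
    constructor
    · exact (hw.comp (continuous_const.add continuous_id)).continuousOn
    · refine ⟨B + C, ?_⟩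
      rintro v ⟨θ, rfl⟩
      rcases le_or_gt (s + θ.1) 0 with h | h
      · have h1 : Real.exp (r * (s + θ.1)) * ‖w (s + θ.1)‖ ≤ B :=
          hB ⟨(⟨s + θ.1, h⟩ : Set.Iic (0:ℝ)), rfl⟩
        have heq : r * θ.1 = -(r*s) + r*(s + θ.1) := by ring
        have he : Real.exp (-(r*s)) ≤ 1 := Real.exp_le_one_iff.2 (by nlinarith [hs.1])
        calc Real.exp (r * θ.1) * ‖w (s + θ.1)‖
            = Real.exp (-(r*s)) * (Real.exp (r * (s + θ.1)) * ‖w (s + θ.1)‖) := by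
              rw [heq, Real.exp_add, mul_assoc]
          _ ≤ 1 * B := mul_le_mul he h1 (by positivity) one_pos.le
          _ ≤ B + C := by linarith
      · have h1 : ‖w (s + θ.1)‖ ≤ C := hC _ ⟨h.le, by
          have := θ.2
          simp only [Set.mem_Iic] at this
          linarith [hs.2]⟩
        have he : Real.exp (r * θ.1) ≤ 1 := by
          apply Real.exp_le_one_iff.2
          have := θ.2
          simp only [Set.mem_Iic] at this
          nlinarith
        calc Real.exp (r * θ.1) * ‖w (s + θ.1)‖
            ≤ 1 * C := mul_le_mul he h1 (norm_nonneg _) one_pos.le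
          _ ≤ B + C := by linarith
  set S := ⨆ s : Set.Ioc (0:ℝ) t, ‖x s.1 - y s.1‖ ^ 2 with hSdef
  have hSbdd : BddAbove (Set.range fun s : Set.Ioc (0:ℝ) t => ‖x s.1 - y s.1‖ ^ 2) := by
    obtain ⟨C, hC⟩ := isCompact_Icc.exists_bound_of_continuousOn
      (s := Set.Icc (0:ℝ) t) (hx.sub hy).continuousOn
    refine ⟨C ^ 2, ?_⟩
    rintro v ⟨s, rfl⟩
    have h1 : ‖x s.1 - y s.1‖ ≤ C := hC s.1 ⟨s.2.1.le, s.2.2⟩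
    have h0 : (0:ℝ) ≤ ‖x s.1 - y s.1‖ := norm_nonneg _
    show ‖x s.1 - y s.1‖ ^ 2 ≤ C ^ 2
    nlinarith [mul_self_le_mul_self h0 h1]
  have hSnn : 0 ≤ S := Real.iSup_nonneg fun s => sq_nonneg _
  have hSmem : ∀ s : Set.Ioc (0:ℝ) t, ‖x s.1 - y s.1‖ ^ 2 ≤ S := fun s => le_ciSup hSbdd s
  set μM := muExp μ (2*r) with hμMdef
  have hμMnn : 0 ≤ μM :=
    setIntegral_nonneg measurableSet_Iic fun θ _ => (Real.exp_pos _).le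
  have hconst : IntegrableOn (fun _ : ℝ => S) (Set.Iic (0:ℝ)) μ := by
    refine integrableOn_const ?_
    rw [hIic]; exact ENNReal.one_ne_top
  have hgint : IntegrableOn (fun θ => Q^2 * Real.exp (-(2*r) * θ) + S) (Set.Iic (0:ℝ)) μ :=
    (hμ.2.2.const_mul _).add hconst
  have hint : ∀ s ∈ Set.Ioc (0:ℝ) t,
      (∫ θ in Set.Iic (0:ℝ), ‖x (s+θ) - y (s+θ)‖^2 ∂μ) ≤ Q^2 * μM + S := by
    intro s hs
    have hpt : ∀ θ ∈ Set.Iic (0:ℝ),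
        ‖x (s+θ) - y (s+θ)‖^2 ≤ Q^2 * Real.exp (-(2*r)*θ) + S := by
      intro θ hθ
      simp only [Set.mem_Iic] at hθ
      rcases le_or_gt (s + θ) 0 with h | h
      · have h1 : ‖x (s+θ) - y (s+θ)‖ ≤ Q * Real.exp (-r * (s+θ)) := hzle _ h
        have h2 : ‖x (s+θ) - y (s+θ)‖^2 ≤ Q^2 * Real.exp (-r*(s+θ))^2 := by
          nlinarith [norm_nonneg (x (s+θ) - y (s+θ)),
            mul_nonneg hQnn (Real.exp_pos (-r*(s+θ))).le]
        have h3 : Real.exp (-r*(s+θ))^2 = Real.exp (-(2*r)*s) * Real.exp (-(2*r)*θ) := by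
          rw [pow_two, ← Real.exp_add, ← Real.exp_add]
          congr 1; ring
        have h4 : Real.exp (-(2*r)*s) ≤ 1 := Real.exp_le_one_iff.2 (by nlinarith [hs.1])
        calc ‖x (s+θ) - y (s+θ)‖^2
            ≤ Q^2 * (Real.exp (-(2*r)*s) * Real.exp (-(2*r)*θ)) := by rw [← h3]; exact h2
          _ ≤ Q^2 * Real.exp (-(2*r)*θ) := by
              nlinarith [mul_nonneg (mul_nonneg (sq_nonneg Q) (Real.exp_pos (-(2*r)*θ)).le)
                (sub_nonneg.2 h4)]
          _ ≤ Q^2 * Real.exp (-(2*r)*θ) + S := le_add_of_nonneg_right hSnn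
      · have hmem : s + θ ∈ Set.Ioc (0:ℝ) t := ⟨h, by linarith [hs.2]⟩
        have h1 : ‖x (s+θ) - y (s+θ)‖^2 ≤ S := hSmem ⟨s + θ, hmem⟩
        have h2 : (0:ℝ) ≤ Q^2 * Real.exp (-(2*r)*θ) := by positivity
        linarith
    calc (∫ θ in Set.Iic (0:ℝ), ‖x (s+θ) - y (s+θ)‖^2 ∂μ)
        ≤ ∫ θ in Set.Iic (0:ℝ), (Q^2 * Real.exp (-(2*r)*θ) + S) ∂μ :=
          integral_mono_of_nonneg (ae_of_all _ fun θ => by positivity) hgint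
            ((ae_restrict_iff' measurableSet_Iic).2 (ae_of_all _ hpt))
      _ = Q^2 * μM + S := by
          rw [integral_add (hμ.2.2.const_mul _) hconst, integral_const_mul, setIntegral_const, measureReal_def,
            hIic]
          simp [hμMdef, muExp]
  have hxs : ∀ s ∈ Set.Ioc (0:ℝ) t, MemCr d r (fun θ => x (s+θ)) := hseg x hx hx0
  have hys : ∀ s ∈ Set.Ioc (0:ℝ) t, MemCr d r (fun θ => y (s+θ)) := hseg y hy hy0
  have hΔ : ∀ s ∈ Set.Ioc (0:ℝ) t,
      ‖D (fun θ => x (s+θ)) - D (fun θ => y (s+θ))‖^2 ≤ k^2 * (Q^2 * μM + S) := by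
    intro s hs
    refine le_trans (hD _ _ (hxs s hs) (hys s hs)) ?_
    exact mul_le_mul_of_nonneg_left (hint s hs) (sq_nonneg k)
  set W := ⨆ s : Set.Ioc (0:ℝ) t,
      ‖x s.1 - y s.1 - D (fun θ => x (s.1 + θ)) + D (fun θ => y (s.1 + θ))‖ ^ 2 with hWdef
  have hWbdd : BddAbove (Set.range fun s : Set.Ioc (0:ℝ) t =>
      ‖x s.1 - y s.1 - D (fun θ => x (s.1 + θ)) + D (fun θ => y (s.1 + θ))‖ ^ 2) := by
    refine ⟨2*S + 2*(k^2*(Q^2*μM+S)), ?_⟩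
    rintro v ⟨s, rfl⟩
    show ‖x s.1 - y s.1 - D (fun θ => x (s.1 + θ)) + D (fun θ => y (s.1 + θ))‖ ^ 2 ≤
      2*S + 2*(k^2*(Q^2*μM+S))
    have h1 : ‖x s.1 - y s.1‖^2 ≤ S := hSmem s
    have h2 := hΔ s.1 s.2
    have h3 : ‖x s.1 - y s.1 - D (fun θ => x (s.1 + θ)) + D (fun θ => y (s.1 + θ))‖
        ≤ ‖x s.1 - y s.1‖ + ‖D (fun θ => x (s.1 + θ)) - D (fun θ => y (s.1 + θ))‖ := by
      rw [sub_add]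
      exact norm_sub_le _ _
    nlinarith [mul_self_le_mul_self (norm_nonneg
        (x s.1 - y s.1 - D (fun θ => x (s.1 + θ)) + D (fun θ => y (s.1 + θ)))) h3,
      sq_nonneg (‖x s.1 - y s.1‖ - ‖D (fun θ => x (s.1 + θ)) - D (fun θ => y (s.1 + θ))‖),
      norm_nonneg (x s.1 - y s.1),
      norm_nonneg (D (fun θ => x (s.1 + θ)) - D (fun θ => y (s.1 + θ)))]
  have hWmem : ∀ s : Set.Ioc (0:ℝ) t,
      ‖x s.1 - y s.1 - D (fun θ => x (s.1 + θ)) + D (fun θ => y (s.1 + θ))‖ ^ 2 ≤ W :=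
    fun s => le_ciSup hWbdd s
  have hWnn : 0 ≤ W := Real.iSup_nonneg fun s => sq_nonneg _
  have key : ∀ s : Set.Ioc (0:ℝ) t,
      ‖x s.1 - y s.1‖^2 ≤ W / (1-k) + k*(Q^2*μM) + k*S := by
    intro s
    set a := ‖x s.1 - y s.1 - D (fun θ => x (s.1 + θ)) + D (fun θ => y (s.1 + θ))‖ with ha
    set b := ‖D (fun θ => x (s.1 + θ)) - D (fun θ => y (s.1 + θ))‖ with hb
    have ha0 : 0 ≤ a := norm_nonneg _
    have hb0 : 0 ≤ b := norm_nonneg _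
    have hab : ‖x s.1 - y s.1‖ ≤ a + b := by
      have heq : x s.1 - y s.1 =
          (x s.1 - y s.1 - D (fun θ => x (s.1 + θ)) + D (fun θ => y (s.1 + θ))) +
          (D (fun θ => x (s.1 + θ)) - D (fun θ => y (s.1 + θ))) := by abel
      rw [heq]
      exact norm_add_le _ _
    have hb2 : b^2 ≤ k^2*(Q^2*μM+S) := hΔ s.1 s.2
    have ha2 : a^2 ≤ W := hWmem s
    have hsplit : (a+b)^2 ≤ a^2/(1-k) + b^2/k := by
      rw [div_add_div _ _ (ne_of_gt h1k) (ne_of_gt hk0), le_div_iff₀ (by positivity)]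
      nlinarith [sq_nonneg (k*a - (1-k)*b)]
    have hz2 : ‖x s.1 - y s.1‖^2 ≤ (a+b)^2 := by
      nlinarith [mul_self_le_mul_self (norm_nonneg (x s.1 - y s.1)) hab]
    have hbk : b^2/k ≤ k*(Q^2*μM) + k*S := by
      rw [div_le_iff₀ hk0]
      nlinarith
    have haw : a^2/(1-k) ≤ W/(1-k) := by gcongr
    linarith
  have hSle : S ≤ W/(1-k) + k*(Q^2*μM) + k*S := ciSup_le key
  have e1 : k * μM / (1-k) * Q^2 + 1/(1-k)^2 * W = (W/(1-k) + k*(Q^2*μM)) / (1-k) := by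
    field_simp
    ring
  rw [e1, le_div_iff₀ h1k]
  nlinarith
end
end

section
/- Let r > 0, μ ∈ M_{2r}, and let x : ℝ → ℝ^d be continuous with x₀ ∈ C_r. Then for every t > 0, ∫_0^t ∫_{−∞}^0 |x(s + θ)|² μ(dθ) ds ≤ (μ^{(2r)} / (2r)) ‖x₀‖_r² + ∫_0^t |x(s)|² ds. -/
set_option maxHeartbeats 1000000


open MeasureTheory

noncomputable section

/-- fact (3.12) of Wu–Yin–Mao used in the paper: for `r > 0`,
`μ ∈ M_{2r}`, and `x : ℝ → ℝ^d` continuous with `x₀ ∈ C_r`, for every `t > 0`,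
`∫_0^t ∫_{(-∞,0]} |x(s+θ)|² μ(dθ) ds ≤ (μ^{(2r)}/(2r)) ‖x₀‖_r² + ∫_0^t |x(s)|² ds`. -/
theorem double_integral_le (d : ℕ) (hd : 1 ≤ d) (r : ℝ) (hr : 0 < r)
    (μ : Measure ℝ) (hμ : MemM μ (2 * r))
    (x : ℝ → E d) (hx : Continuous x) (hx0 : MemCr d r x)
    (t : ℝ) (ht : 0 < t) :
    (∫ s in (0 : ℝ)..t, ∫ θ in Set.Iic (0 : ℝ), ‖x (s + θ)‖ ^ 2 ∂μ) ≤
      muExp μ (2 * r) / (2 * r) * crNorm d r x ^ 2 + ∫ s in (0 : ℝ)..t, ‖x s‖ ^ 2 := by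
  obtain ⟨hprob, hIoi, hint⟩ := hμ
  set C := crNorm d r x with hCdef
  have hxcont : Continuous fun u : ℝ => ‖x u‖ ^ 2 := (hx.norm).pow 2
  have hii : ∀ a b : ℝ, IntervalIntegrable (fun u => ‖x u‖ ^ 2) volume a b :=
    fun a b => hxcont.intervalIntegrable a b
  have hC : ∀ u : ℝ, u ≤ 0 → Real.exp (r * u) * ‖x u‖ ≤ C :=
    fun u hu => le_ciSup hx0.2 (⟨u, hu⟩ : Set.Iic (0 : ℝ))
  have hC0 : 0 ≤ C := le_trans (by positivity) (hC 0 le_rfl)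
  -- pointwise bound on (-∞, 0]
  have hxb : ∀ u : ℝ, u ≤ 0 → ‖x u‖ ^ 2 ≤ C ^ 2 * Real.exp (-(2 * r) * u) := by
    intro u hu
    have hpos : 0 < Real.exp (r * u) := Real.exp_pos _
    have h1 : ‖x u‖ ≤ C * Real.exp (-(r * u)) := by
      have h := hC u hu
      rw [Real.exp_neg, ← div_eq_mul_inv, le_div_iff₀ hpos]
      nlinarith [h]
    have h2 : Real.exp (-(2 * r) * u) = Real.exp (-(r * u)) * Real.exp (-(r * u)) := by
      rw [← Real.exp_add]; ring_nf
    calc ‖x u‖ ^ 2 ≤ (C * Real.exp (-(r * u))) ^ 2 :=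
          pow_le_pow_left₀ (norm_nonneg _) h1 2
      _ = C ^ 2 * Real.exp (-(2 * r) * u) := by rw [h2]; ring
  set I := ∫ s in (0 : ℝ)..t, ‖x s‖ ^ 2 with hIdef
  have hInn : 0 ≤ I := intervalIntegral.integral_nonneg ht.le (fun u _ => by positivity)
  -- the key pointwise-in-θ bound
  have key : ∀ θ : ℝ, θ ≤ 0 →
      (∫ s in (0 : ℝ)..t, ‖x (s + θ)‖ ^ 2) ≤ C ^ 2 / (2 * r) * Real.exp (-(2 * r) * θ) + I := by
    intro θ hθ
    have hshift : (∫ s in (0 : ℝ)..t, ‖x (s + θ)‖ ^ 2) = ∫ u in θ..(t + θ), ‖x u‖ ^ 2 := by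
      rw [intervalIntegral.integral_comp_add_right (fun u => ‖x u‖ ^ 2) θ, zero_add]
    have hsplit : (∫ u in θ..(t + θ), ‖x u‖ ^ 2) =
        (∫ u in θ..(0 : ℝ), ‖x u‖ ^ 2) + ∫ u in (0 : ℝ)..(t + θ), ‖x u‖ ^ 2 :=
      (intervalIntegral.integral_add_adjacent_intervals (hii θ 0) (hii 0 (t + θ))).symm
    -- first piece
    have hexp_ii : ∀ a b : ℝ, IntervalIntegrable (fun u => C ^ 2 * Real.exp (-(2 * r) * u)) volume a b :=
      fun a b => (Continuous.intervalIntegrable (by continuity) a b)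
    have hderiv : ∀ u : ℝ, HasDerivAt (fun v => Real.exp (-(2 * r) * v) / (-(2 * r)))
        (Real.exp (-(2 * r) * u)) u := by
      intro u
      have hne : (-(2 * r)) ≠ 0 := ne_of_lt (by linarith)
      have h1 : HasDerivAt (fun v : ℝ => -(2 * r) * v) (-(2 * r)) u := by
        simpa using (hasDerivAt_id u).const_mul (-(2 * r))
      have h2 := (h1.exp).div_const (-(2 * r))
      rw [mul_div_cancel_right₀ _ hne] at h2
      exact h2
    have hexp_int : (∫ u in θ..(0 : ℝ), Real.exp (-(2 * r) * u)) =
        (Real.exp (-(2 * r) * θ) - 1) / (2 * r) := by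
      rw [intervalIntegral.integral_eq_sub_of_hasDerivAt (fun u _ => hderiv u)
        (Continuous.intervalIntegrable (by continuity) θ 0)]
      rw [mul_zero, Real.exp_zero]
      field_simp
      ring
    have hpiece1 : (∫ u in θ..(0 : ℝ), ‖x u‖ ^ 2) ≤ C ^ 2 / (2 * r) * Real.exp (-(2 * r) * θ) := by
      have hmono : (∫ u in θ..(0 : ℝ), ‖x u‖ ^ 2) ≤
          ∫ u in θ..(0 : ℝ), C ^ 2 * Real.exp (-(2 * r) * u) :=
        intervalIntegral.integral_mono_on hθ (hii θ 0) (hexp_ii θ 0)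
          (fun u hu => hxb u hu.2)
      have hval : (∫ u in θ..(0 : ℝ), C ^ 2 * Real.exp (-(2 * r) * u)) =
          C ^ 2 * ((Real.exp (-(2 * r) * θ) - 1) / (2 * r)) := by
        rw [intervalIntegral.integral_const_mul, hexp_int]
      have hle : C ^ 2 * ((Real.exp (-(2 * r) * θ) - 1) / (2 * r)) ≤
          C ^ 2 / (2 * r) * Real.exp (-(2 * r) * θ) := by
        rw [div_mul_eq_mul_div, mul_div_assoc]
        apply mul_le_mul_of_nonneg_left _ (by positivity)
        apply div_le_div_of_nonneg_right _ (by positivity)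
        · linarith
      linarith [hmono, hval ▸ hmono]
    -- second piece
    have hpiece2 : (∫ u in (0 : ℝ)..(t + θ), ‖x u‖ ^ 2) ≤ I := by
      rcases le_or_gt (t + θ) 0 with h | h
      · have : (∫ u in (0 : ℝ)..(t + θ), ‖x u‖ ^ 2) ≤ 0 := by
          rw [intervalIntegral.integral_symm]
          simp only [neg_nonpos]
          exact intervalIntegral.integral_nonneg h (fun u _ => by positivity)
        linarith
      · exact intervalIntegral.integral_mono_interval le_rfl h.le (by linarith)
          (Filter.Eventually.of_forall fun u => by positivity) (hii 0 t)
    calc (∫ s in (0 : ℝ)..t, ‖x (s + θ)‖ ^ 2)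
        = (∫ u in θ..(0 : ℝ), ‖x u‖ ^ 2) + ∫ u in (0 : ℝ)..(t + θ), ‖x u‖ ^ 2 := by
          rw [hshift, hsplit]
      _ ≤ C ^ 2 / (2 * r) * Real.exp (-(2 * r) * θ) + I := add_le_add hpiece1 hpiece2
  -- measures
  set m1 : Measure ℝ := volume.restrict (Set.Ioc 0 t) with hm1def
  set m2 : Measure ℝ := μ.restrict (Set.Iic 0) with hm2def
  haveI : IsFiniteMeasure m1 := by
    constructor
    rw [hm1def, Measure.restrict_apply_univ, Real.volume_Ioc]
    exact ENNReal.ofReal_lt_top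
  haveI : IsFiniteMeasure m2 := by
    rw [hm2def]; infer_instance
  -- bound B on [0, t]
  obtain ⟨u₀, hu₀, hB⟩ := isCompact_Icc.exists_isMaxOn (Set.nonempty_Icc.mpr ht.le)
    (hxcont.continuousOn (s := Set.Icc 0 t))
  set B := ‖x u₀‖ ^ 2 with hBdef
  have hB0 : 0 ≤ B := by positivity
  set g2 : ℝ → ℝ := fun θ => C ^ 2 * Real.exp (-(2 * r) * θ) + B with hg2def
  have hg2int : Integrable g2 m2 := (hint.const_mul (C ^ 2)).add (integrable_const B)
  have hg2meas : AEStronglyMeasurable (fun z : ℝ × ℝ => g2 z.2) (m1.prod m2) :=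
    (Continuous.aestronglyMeasurable (by fun_prop))
  have hg2snd : Integrable (fun z : ℝ × ℝ => g2 z.2) (m1.prod m2) := by
    rw [integrable_prod_iff hg2meas]
    constructor
    · exact Filter.Eventually.of_forall fun s => hg2int
    · exact integrable_const (∫ θ, ‖g2 θ‖ ∂m2)
  have hfmeas : AEStronglyMeasurable (fun z : ℝ × ℝ => ‖x (z.1 + z.2)‖ ^ 2) (m1.prod m2) :=
    (Continuous.aestronglyMeasurable (by fun_prop))
  have hbound : ∀ᵐ z : ℝ × ℝ ∂(m1.prod m2), ‖‖x (z.1 + z.2)‖ ^ 2‖ ≤ g2 z.2 := by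
    rw [hm1def, hm2def, Measure.prod_restrict]
    rw [ae_restrict_iff' (measurableSet_Ioc.prod measurableSet_Iic)]
    apply Filter.Eventually.of_forall
    rintro ⟨s, θ⟩ ⟨hs, hθ⟩
    simp only [Set.mem_Ioc, Set.mem_Iic] at hs hθ
    simp only [Real.norm_eq_abs, abs_of_nonneg (by positivity : (0:ℝ) ≤ ‖x (s + θ)‖ ^ 2)]
    rcases le_or_gt (s + θ) 0 with h | h
    · have h1 : ‖x (s + θ)‖ ^ 2 ≤ C ^ 2 * Real.exp (-(2 * r) * (s + θ)) := hxb _ h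
      have h2 : Real.exp (-(2 * r) * (s + θ)) ≤ Real.exp (-(2 * r) * θ) := by
        apply Real.exp_le_exp.mpr
        nlinarith [hs.1.le, hr]
      have h3 : C ^ 2 * Real.exp (-(2 * r) * (s + θ)) ≤ C ^ 2 * Real.exp (-(2 * r) * θ) :=
        mul_le_mul_of_nonneg_left h2 (by positivity)
      have : ‖x (s + θ)‖ ^ 2 ≤ C ^ 2 * Real.exp (-(2 * r) * θ) := le_trans h1 h3
      simp only [hg2def]
      linarith
    · have hmem : s + θ ∈ Set.Icc 0 t := ⟨h.le, by linarith [hs.2, hθ]⟩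
      have h1 : ‖x (s + θ)‖ ^ 2 ≤ B := hB hmem
      have : (0 : ℝ) ≤ C ^ 2 * Real.exp (-(2 * r) * θ) := by positivity
      simp only [hg2def]
      linarith
  have huncurry : Integrable (fun z : ℝ × ℝ => ‖x (z.1 + z.2)‖ ^ 2) (m1.prod m2) :=
    Integrable.mono' hg2snd hfmeas hbound
  -- rewrite LHS as set integral and swap
  have hLHS : (∫ s in (0 : ℝ)..t, ∫ θ in Set.Iic (0 : ℝ), ‖x (s + θ)‖ ^ 2 ∂μ) =
      ∫ θ, (∫ s, ‖x (s + θ)‖ ^ 2 ∂m1) ∂m2 := by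
    rw [intervalIntegral.integral_of_le ht.le]
    exact integral_integral_swap huncurry
  rw [hLHS]
  -- integrability of the outer integrand
  have houter : Integrable (fun θ => ∫ s, ‖x (s + θ)‖ ^ 2 ∂m1) m2 :=
    Integrable.integral_prod_right huncurry
  have hrhs_int : Integrable (fun θ => C ^ 2 / (2 * r) * Real.exp (-(2 * r) * θ) + I) m2 :=
    (hint.const_mul (C ^ 2 / (2 * r))).add (integrable_const I)
  have hmono2 : (∫ θ, (∫ s, ‖x (s + θ)‖ ^ 2 ∂m1) ∂m2) ≤
      ∫ θ, (C ^ 2 / (2 * r) * Real.exp (-(2 * r) * θ) + I) ∂m2 := by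
    apply integral_mono_ae houter hrhs_int
    have hae : ∀ᵐ θ ∂m2, θ ∈ Set.Iic (0 : ℝ) := ae_restrict_mem measurableSet_Iic
    filter_upwards [hae] with θ hθ
    have : (∫ s, ‖x (s + θ)‖ ^ 2 ∂m1) = ∫ s in (0 : ℝ)..t, ‖x (s + θ)‖ ^ 2 := by
      rw [intervalIntegral.integral_of_le ht.le, hm1def]
    rw [this]
    exact key θ hθ
  -- compute the right-hand integral
  have hμIic : μ (Set.Iic 0) = 1 := by
    have h1 : μ (Set.Iic 0) = μ (Set.Ioi (0:ℝ))ᶜ := by rw [Set.compl_Ioi]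
    rw [h1, measure_compl measurableSet_Ioi (by simp), hIoi, measure_univ, tsub_zero]
  have hm2univ : m2 Set.univ = 1 := by
    rw [hm2def, Measure.restrict_apply_univ]; exact hμIic
  have hval : (∫ θ, (C ^ 2 / (2 * r) * Real.exp (-(2 * r) * θ) + I) ∂m2) =
      C ^ 2 / (2 * r) * muExp μ (2 * r) + I := by
    have e1 : (∫ θ, (C ^ 2 / (2 * r) * Real.exp (-(2 * r) * θ) + I) ∂m2)
        = (∫ θ, C ^ 2 / (2 * r) * Real.exp (-(2 * r) * θ) ∂m2) + ∫ _θ : ℝ, I ∂m2 :=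
      integral_add (hint.const_mul _) (integrable_const I)
    have e2 : (∫ θ, C ^ 2 / (2 * r) * Real.exp (-(2 * r) * θ) ∂m2)
        = C ^ 2 / (2 * r) * muExp μ (2 * r) := by
      rw [MeasureTheory.integral_const_mul]
      rfl
    have e3 : (∫ _θ : ℝ, I ∂m2) = I := by
      rw [integral_const, measureReal_def, hm2univ]
      simp
    rw [e1, e2, e3]
  calc (∫ θ, (∫ s, ‖x (s + θ)‖ ^ 2 ∂m1) ∂m2)
      ≤ ∫ θ, (C ^ 2 / (2 * r) * Real.exp (-(2 * r) * θ) + I) ∂m2 := hmono2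
    _ = C ^ 2 / (2 * r) * muExp μ (2 * r) + I := hval
    _ = muExp μ (2 * r) / (2 * r) * C ^ 2 + I := by ring
end
end

section
/- Let r > 0, μ ∈ M_{2r}, 0 ≤ λ < 2r, and let x : ℝ → ℝ^d be continuous with x₀ ∈ C_r. Then for every t > 0, ∫_0^t ∫_{−∞}^0 e^{λ s} |x(s + θ)|² μ(dθ) ds ≤ (μ^{(2r)} / (2r − λ)) ‖x₀‖_r² + μ^{(2r)} ∫_0^t e^{λ s} |x(s)|² ds. -/
open MeasureTheory

noncomputable section

lemma ofReal_int_le {α : Type*} [MeasurableSpace α] (μ : Measure α) (f : α → ℝ)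
    (hf : ∀ a, 0 ≤ f a) :
    ENNReal.ofReal (∫ a, f a ∂μ) ≤ ∫⁻ a, ENNReal.ofReal (f a) ∂μ := by
  by_cases h : Integrable f μ
  · exact (ofReal_integral_eq_lintegral_ofReal h (Filter.Eventually.of_forall hf)).le
  · rw [integral_undef h]; simp

/-- fact (3.13) of Wu–Yin–Mao used in the paper: for `r > 0`,
`μ ∈ M_{2r}`, `0 ≤ λ < 2r`, and `x : ℝ → ℝ^d` continuous with `x₀ ∈ C_r`, for every `t > 0`,
`∫_0^t ∫_{(-∞,0]} e^{λs} |x(s+θ)|² μ(dθ) ds ≤ (μ^{(2r)}/(2r-λ)) ‖x₀‖_r²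
  + μ^{(2r)} ∫_0^t e^{λs} |x(s)|² ds`. -/
theorem double_integral_exp_le (d : ℕ) (hd : 1 ≤ d) (r lam : ℝ) (hr : 0 < r)
    (hlam : 0 ≤ lam) (hlam2r : lam < 2 * r)
    (μ : Measure ℝ) (hμ : MemM μ (2 * r))
    (x : ℝ → E d) (hx : Continuous x) (hx0 : MemCr d r x)
    (t : ℝ) (ht : 0 < t) :
    (∫ s in (0 : ℝ)..t, ∫ θ in Set.Iic (0 : ℝ), Real.exp (lam * s) * ‖x (s + θ)‖ ^ 2 ∂μ) ≤
      muExp μ (2 * r) / (2 * r - lam) * crNorm d r x ^ 2 +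
      muExp μ (2 * r) * ∫ s in (0 : ℝ)..t, Real.exp (lam * s) * ‖x s‖ ^ 2 := by
  haveI := hμ.1
  set K : ℝ := crNorm d r x with hKdef
  set M : ℝ := muExp μ (2 * r) with hMdef
  set C : ℝ := ∫ s in (0 : ℝ)..t, Real.exp (lam * s) * ‖x s‖ ^ 2 with hCdef
  set c : ℝ := lam - 2 * r with hcdef
  have hcneg : c < 0 := by simp [hcdef]; linarith
  have hc0 : c ≠ 0 := ne_of_lt hcneg
  have h2rl : (0:ℝ) < 2 * r - lam := by linarith
  have hK0 : 0 ≤ K := by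
    apply Real.iSup_nonneg
    intro θ; positivity
  have hKle : ∀ u : ℝ, u ≤ 0 → ‖x u‖ ^ 2 ≤ Real.exp (-(2*r) * u) * K ^ 2 := by
    intro u hu
    have h1 : Real.exp (r * u) * ‖x u‖ ≤ K :=
      le_ciSup hx0.2 (⟨u, hu⟩ : Set.Iic (0:ℝ))
    have h2 : ‖x u‖ ≤ Real.exp (-(r) * u) * K := by
      rw [neg_mul, Real.exp_neg]
      rw [inv_mul_eq_div, le_div_iff₀ (Real.exp_pos _)]
      linarith [h1]
    have h3 : ‖x u‖ ^ 2 ≤ (Real.exp (-(r) * u) * K) ^ 2 :=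
      pow_le_pow_left₀ (norm_nonneg _) h2 2
    calc ‖x u‖ ^ 2 ≤ (Real.exp (-(r) * u) * K) ^ 2 := h3
      _ = Real.exp (-(2*r) * u) * K ^ 2 := by
          rw [mul_pow, ← Real.exp_nat_mul]
          ring_nf
  have hM0 : 0 ≤ M := by
    rw [hMdef, muExp]
    exact setIntegral_nonneg measurableSet_Iic fun θ _ => (Real.exp_pos _).le
  have hMofReal : ∫⁻ θ in Set.Iic (0:ℝ), ENNReal.ofReal (Real.exp (-(2*r) * θ)) ∂μ
      = ENNReal.ofReal M := by
    rw [hMdef, muExp]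
    exact (ofReal_integral_eq_lintegral_ofReal hμ.2.2
      (Filter.Eventually.of_forall fun θ => (Real.exp_pos _).le)).symm
  have hCcont : Continuous fun s : ℝ => Real.exp (lam * s) * ‖x s‖ ^ 2 := by
    fun_prop
  have hC0 : 0 ≤ C := by
    rw [hCdef]
    exact intervalIntegral.integral_nonneg ht.le fun s _ => by positivity
  -- the indicator function G
  set G : ℝ → ENNReal :=
    (Set.Icc (0:ℝ) t).indicator (fun u => ENNReal.ofReal (Real.exp (lam * u) * ‖x u‖ ^ 2))
    with hGdef
  have hGmeas : Measurable G :=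
    Measurable.indicator (by fun_prop) measurableSet_Icc
  have hGint : ∫⁻ u, G u = ENNReal.ofReal C := by
    rw [hGdef, lintegral_indicator measurableSet_Icc _]
    rw [← ofReal_integral_eq_lintegral_ofReal
      (hCcont.continuousOn.integrableOn_compact isCompact_Icc)
      (Filter.Eventually.of_forall fun u => by positivity)]
    rw [hCdef, intervalIntegral.integral_of_le ht.le, integral_Icc_eq_integral_Ioc]
  -- pointwise bound
  have hpt : ∀ s ∈ Set.Ioc (0:ℝ) t, ∀ θ ∈ Set.Iic (0:ℝ),
      ENNReal.ofReal (Real.exp (lam * s) * ‖x (s + θ)‖ ^ 2) ≤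
        ENNReal.ofReal (Real.exp (c * s) * K ^ 2) * ENNReal.ofReal (Real.exp (-(2*r) * θ))
        + ENNReal.ofReal (Real.exp (-(2*r) * θ)) * G (s + θ) := by
    intro s hs θ hθ
    have hθ0 : θ ≤ 0 := hθ
    by_cases hsθ : 0 ≤ s + θ
    · -- second term dominates
      have hmem : s + θ ∈ Set.Icc (0:ℝ) t := ⟨hsθ, by linarith [hs.2]⟩
      rw [hGdef, Set.indicator_of_mem hmem]
      have hreal : Real.exp (lam * s) * ‖x (s + θ)‖ ^ 2 ≤
          Real.exp (-(2*r) * θ) * (Real.exp (lam * (s + θ)) * ‖x (s + θ)‖ ^ 2) := by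
        have : Real.exp (lam * s) ≤ Real.exp (-(2*r) * θ) * Real.exp (lam * (s + θ)) := by
          rw [← Real.exp_add]
          apply Real.exp_le_exp.mpr
          nlinarith
        nlinarith [sq_nonneg ‖x (s + θ)‖, Real.exp_pos (lam * s)]
      calc ENNReal.ofReal (Real.exp (lam * s) * ‖x (s + θ)‖ ^ 2)
          ≤ ENNReal.ofReal (Real.exp (-(2*r) * θ) * (Real.exp (lam * (s + θ)) * ‖x (s + θ)‖ ^ 2)) :=
            ENNReal.ofReal_le_ofReal hreal
        _ = ENNReal.ofReal (Real.exp (-(2*r) * θ)) *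
              ENNReal.ofReal (Real.exp (lam * (s + θ)) * ‖x (s + θ)‖ ^ 2) := by
            rw [ENNReal.ofReal_mul (Real.exp_pos _).le]
        _ ≤ _ := le_add_self
    · -- first term dominates
      have hsθ' : s + θ ≤ 0 := le_of_not_ge hsθ
      have hreal : Real.exp (lam * s) * ‖x (s + θ)‖ ^ 2 ≤
          Real.exp (c * s) * K ^ 2 * Real.exp (-(2*r) * θ) := by
        have h1 := hKle (s + θ) hsθ'
        have h2 : Real.exp (lam * s) * Real.exp (-(2*r) * (s + θ)) =
            Real.exp (c * s) * Real.exp (-(2*r) * θ) := by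
          rw [← Real.exp_add, ← Real.exp_add, hcdef]; ring_nf
        nlinarith [Real.exp_pos (lam * s), Real.exp_pos (c * s), Real.exp_pos (-(2*r) * θ),
          sq_nonneg K]
      calc ENNReal.ofReal (Real.exp (lam * s) * ‖x (s + θ)‖ ^ 2)
          ≤ ENNReal.ofReal (Real.exp (c * s) * K ^ 2 * Real.exp (-(2*r) * θ)) :=
            ENNReal.ofReal_le_ofReal hreal
        _ = ENNReal.ofReal (Real.exp (c * s) * K ^ 2) *
              ENNReal.ofReal (Real.exp (-(2*r) * θ)) := by
            rw [ENNReal.ofReal_mul (by positivity)]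
        _ ≤ _ := le_self_add
  -- nonnegativity of RHS
  have hRHS0 : 0 ≤ M / (2 * r - lam) * K ^ 2 + M * C := by positivity
  -- the auxiliary function J
  set J : ℝ → ENNReal := fun s =>
    ∫⁻ θ in Set.Iic (0:ℝ), ENNReal.ofReal (Real.exp (-(2*r) * θ)) * G (s + θ) ∂μ with hJdef
  -- key bound in ℝ≥0∞
  have key : ENNReal.ofReal
      (∫ s in (0:ℝ)..t, ∫ θ in Set.Iic (0:ℝ), Real.exp (lam * s) * ‖x (s + θ)‖ ^ 2 ∂μ) ≤
      ENNReal.ofReal (M / (2 * r - lam) * K ^ 2 + M * C) := by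
    rw [intervalIntegral.integral_of_le ht.le]
    have hmeas1 : Measurable fun θ : ℝ => ENNReal.ofReal (Real.exp (-(2*r) * θ)) := by
      fun_prop
    calc ENNReal.ofReal (∫ s in Set.Ioc (0:ℝ) t, ∫ θ in Set.Iic (0:ℝ), Real.exp (lam * s) * ‖x (s + θ)‖ ^ 2 ∂μ) ≤ ∫⁻ s in Set.Ioc (0:ℝ) t,
            ENNReal.ofReal (∫ θ in Set.Iic (0:ℝ), Real.exp (lam * s) * ‖x (s + θ)‖ ^ 2 ∂μ) :=
          ofReal_int_le _ _ (fun s => integral_nonneg fun θ => by positivity)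
      _ ≤ ∫⁻ s in Set.Ioc (0:ℝ) t,
            ∫⁻ θ in Set.Iic (0:ℝ),
              ENNReal.ofReal (Real.exp (lam * s) * ‖x (s + θ)‖ ^ 2) ∂μ :=
          lintegral_mono fun s => ofReal_int_le _ _ (fun θ => by positivity)
      _ ≤ ∫⁻ s in Set.Ioc (0:ℝ) t,
            (ENNReal.ofReal (Real.exp (c * s) * K ^ 2) * ENNReal.ofReal M + J s) := by
          apply lintegral_mono_ae
          filter_upwards [ae_restrict_mem measurableSet_Ioc] with s hs
          have step1 : (∫⁻ θ in Set.Iic (0:ℝ),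
              ENNReal.ofReal (Real.exp (lam * s) * ‖x (s + θ)‖ ^ 2) ∂μ) ≤
              ∫⁻ θ in Set.Iic (0:ℝ),
                (ENNReal.ofReal (Real.exp (c * s) * K ^ 2) *
                    ENNReal.ofReal (Real.exp (-(2*r) * θ))
                  + ENNReal.ofReal (Real.exp (-(2*r) * θ)) * G (s + θ)) ∂μ := by
            apply lintegral_mono_ae
            filter_upwards [ae_restrict_mem measurableSet_Iic] with θ hθ
            exact hpt s hs θ hθ
          refine step1.trans (le_of_eq ?_)
          rw [lintegral_add_left (by fun_prop)]
          congr 1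
          rw [lintegral_const_mul' _ _ ENNReal.ofReal_ne_top, hMofReal]
      _ = (∫⁻ s in Set.Ioc (0:ℝ) t, ENNReal.ofReal (Real.exp (c * s) * K ^ 2) * ENNReal.ofReal M)
            + ∫⁻ s in Set.Ioc (0:ℝ) t, J s := by
          rw [lintegral_add_left (by fun_prop)]
      _ ≤ ENNReal.ofReal (1 / (2 * r - lam)) * (ENNReal.ofReal (K ^ 2) * ENNReal.ofReal M)
            + ENNReal.ofReal M * ENNReal.ofReal C := by
          gcongr
          · -- first summand
            have heq : ∀ s : ℝ, ENNReal.ofReal (Real.exp (c * s) * K ^ 2) * ENNReal.ofReal M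
                = ENNReal.ofReal (Real.exp (c * s)) * (ENNReal.ofReal (K ^ 2) * ENNReal.ofReal M) := by
              intro s
              rw [ENNReal.ofReal_mul (Real.exp_pos _).le, mul_assoc]
            simp_rw [heq]
            rw [lintegral_mul_const' _ _ (by finiteness)]
            gcongr
            have hintexp : IntegrableOn (fun s : ℝ => Real.exp (c * s)) (Set.Ioc 0 t) volume :=
              (Real.continuous_exp.comp (continuous_const.mul continuous_id)).integrableOn_Ioc
            rw [← ofReal_integral_eq_lintegral_ofReal hintexp
              (Filter.Eventually.of_forall fun s => (Real.exp_pos _).le)]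
            apply ENNReal.ofReal_le_ofReal
            have hval : (∫ s in Set.Ioc (0:ℝ) t, Real.exp (c * s)) = c⁻¹ * (Real.exp (c * t) - 1) := by
              rw [← intervalIntegral.integral_of_le ht.le]
              rw [intervalIntegral.integral_comp_mul_left (fun x => Real.exp x) hc0]
              simp [integral_exp]
            rw [hval]
            rw [div_eq_mul_inv, one_mul]
            have h1 : c⁻¹ * (Real.exp (c * t) - 1) = (1 - Real.exp (c * t)) / (2 * r - lam) := by
              rw [hcdef, div_eq_mul_inv, show 2 * r - lam = -(lam - 2 * r) by ring, inv_neg]; ring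
            rw [h1]
            have : (1 : ℝ) - Real.exp (c * t) ≤ 1 := by linarith [Real.exp_pos (c * t)]
            calc (1 - Real.exp (c * t)) / (2 * r - lam) ≤ 1 / (2 * r - lam) := by gcongr
              _ = (2 * r - lam)⁻¹ := one_div _
          · -- second summand
            have hswap : (∫⁻ s in Set.Ioc (0:ℝ) t, J s)
                = ∫⁻ θ in Set.Iic (0:ℝ),
                    (∫⁻ s in Set.Ioc (0:ℝ) t,
                      ENNReal.ofReal (Real.exp (-(2*r) * θ)) * G (s + θ)) ∂μ := by
              apply lintegral_lintegral_swap
              apply Measurable.aemeasurable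
              exact (hmeas1.comp measurable_snd).mul
                (hGmeas.comp (measurable_fst.add measurable_snd))
            rw [hswap]
            calc (∫⁻ θ in Set.Iic (0:ℝ),
                  (∫⁻ s in Set.Ioc (0:ℝ) t,
                    ENNReal.ofReal (Real.exp (-(2*r) * θ)) * G (s + θ)) ∂μ)
                ≤ ∫⁻ θ in Set.Iic (0:ℝ),
                    ENNReal.ofReal (Real.exp (-(2*r) * θ)) * ENNReal.ofReal C ∂μ := by
                  apply lintegral_mono
                  intro θ
                  dsimp only
                  rw [lintegral_const_mul' _ _ ENNReal.ofReal_ne_top]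
                  gcongr
                  calc (∫⁻ s in Set.Ioc (0:ℝ) t, G (s + θ))
                      ≤ ∫⁻ s : ℝ, G (s + θ) := setLIntegral_le_lintegral _ _
                    _ = ∫⁻ u, G u := lintegral_add_right_eq_self G θ
                    _ = ENNReal.ofReal C := hGint
              _ = ENNReal.ofReal M * ENNReal.ofReal C := by
                  rw [lintegral_mul_const' _ _ ENNReal.ofReal_ne_top, hMofReal]
      _ = ENNReal.ofReal (M / (2 * r - lam) * K ^ 2 + M * C) := by
          rw [← ENNReal.ofReal_mul (by positivity), ← ENNReal.ofReal_mul (by positivity),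
            ← ENNReal.ofReal_mul hM0, ← ENNReal.ofReal_add (by positivity) (by positivity)]
          congr 1
          ring
  exact (ENNReal.ofReal_le_ofReal_iff hRHS0).mp key
end
end

section
/- Let r > 0 and let x : ℝ → ℝ^d be continuous with x₀ ∈ C_r. Then for every t ≥ 0 the segment x_t belongs to C_r and ‖x_t‖_r² ≤ e^{−2rt} ‖x₀‖_r² + sup_{0 ≤ s ≤ t} |x(s)|². -/
open MeasureTheory

noncomputable section

/-- for `r > 0` and `x : ℝ → ℝ^d` continuous with `x₀ ∈ C_r`,
for every `t ≥ 0` the segment `x_t(θ) = x(t+θ)` belongs to `C_r` and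
`‖x_t‖_r² ≤ e^{-2rt} ‖x₀‖_r² + sup_{0 ≤ s ≤ t} |x(s)|²`. -/
theorem segment_memCr_and_norm_sq_le (d : ℕ) (hd : 1 ≤ d) (r : ℝ) (hr : 0 < r)
    (x : ℝ → E d) (hx : Continuous x) (hx0 : MemCr d r x)
    (t : ℝ) (ht : 0 ≤ t) :
    MemCr d r (fun θ => x (t + θ)) ∧
    crNorm d r (fun θ => x (t + θ)) ^ 2 ≤
      Real.exp (-(2 * r) * t) * crNorm d r x ^ 2 +
      ⨆ s : Set.Icc (0 : ℝ) t, ‖x s.1‖ ^ 2 := by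

  obtain ⟨hcont, hbdd⟩ := hx0
  set A := crNorm d r x with hA
  have hAnonneg : 0 ≤ A := by
    have h0 : Real.exp (r * (0:ℝ)) * ‖x 0‖ ≤ A :=
      le_ciSup hbdd ⟨0, Set.mem_Iic.mpr le_rfl⟩
    have : (0:ℝ) ≤ Real.exp (r * (0:ℝ)) * ‖x 0‖ := by positivity
    linarith
  have hAle : ∀ θ : ℝ, θ ≤ 0 → Real.exp (r * θ) * ‖x θ‖ ≤ A := fun θ hθ =>
    le_ciSup hbdd ⟨θ, hθ⟩
  -- sup of squares over [0,t]
  set S := ⨆ s : Set.Icc (0:ℝ) t, ‖x s.1‖ ^ 2 with hS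
  have hSbdd : BddAbove (Set.range fun s : Set.Icc (0:ℝ) t => ‖x s.1‖ ^ 2) := by
    have h1 : Continuous fun s : ℝ => ‖x s‖ ^ 2 := by continuity
    have h2 := (isCompact_Icc (a := (0:ℝ)) (b := t)).bddAbove_image h1.continuousOn
    have h3 : (Set.range fun s : Set.Icc (0:ℝ) t => ‖x s.1‖ ^ 2)
        = (fun s : ℝ => ‖x s‖ ^ 2) '' Set.Icc 0 t := by
      ext y
      simp [Set.mem_image]
    rwa [h3]
  have hSle : ∀ s : ℝ, s ∈ Set.Icc (0:ℝ) t → ‖x s‖ ^ 2 ≤ S := fun s hs =>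
    le_ciSup hSbdd ⟨s, hs⟩
  have hSnonneg : 0 ≤ S := by
    have h := hSle 0 ⟨le_refl 0, ht⟩
    nlinarith [sq_nonneg ‖x (0:ℝ)‖]
  -- pointwise bound
  have key : ∀ θ : ℝ, θ ≤ 0 →
      Real.exp (r * θ) * ‖x (t + θ)‖ ≤ max (Real.exp (-(r*t)) * A) (Real.sqrt S) := by
    intro θ hθ
    rcases le_or_gt (t + θ) 0 with h | h
    · refine le_max_of_le_left ?_
      have h1 : Real.exp (r * (t + θ)) * ‖x (t + θ)‖ ≤ A := hAle _ h
      have h2 : Real.exp (r * θ) = Real.exp (-(r*t)) * Real.exp (r * (t + θ)) := by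
        rw [← Real.exp_add]; ring_nf
      rw [h2, mul_assoc]
      exact mul_le_mul_of_nonneg_left h1 (Real.exp_pos _).le
    · refine le_max_of_le_right ?_
      have hmem : t + θ ∈ Set.Icc (0:ℝ) t := ⟨h.le, by linarith⟩
      have h1 : ‖x (t + θ)‖ ≤ Real.sqrt S := by
        rw [show Real.sqrt S = Real.sqrt S from rfl]
        have := hSle _ hmem
        exact (Real.le_sqrt (norm_nonneg _) hSnonneg).mpr this
      have h2 : Real.exp (r * θ) ≤ 1 := by
        apply Real.exp_le_one_iff.mpr
        nlinarith
      calc Real.exp (r * θ) * ‖x (t + θ)‖ ≤ 1 * ‖x (t + θ)‖ :=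
            mul_le_mul_of_nonneg_right h2 (norm_nonneg _)
        _ = ‖x (t + θ)‖ := one_mul _
        _ ≤ Real.sqrt S := h1
  set B := max (Real.exp (-(r*t)) * A) (Real.sqrt S) with hB
  have hsegbdd : BddAbove (Set.range fun θ : Set.Iic (0:ℝ) =>
      Real.exp (r * θ.1) * ‖x (t + θ.1)‖) := by
    refine ⟨B, ?_⟩
    rintro y ⟨θ, rfl⟩
    exact key θ.1 θ.2
  have hmem : MemCr d r (fun θ => x (t + θ)) := by
    refine ⟨?_, hsegbdd⟩
    exact (hx.comp (continuous_const.add continuous_id)).continuousOn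
  refine ⟨hmem, ?_⟩
  have hle : crNorm d r (fun θ => x (t + θ)) ≤ B := by
    apply ciSup_le
    intro θ
    exact key θ.1 θ.2
  have hnn : 0 ≤ crNorm d r (fun θ => x (t + θ)) := by
    have h0 : Real.exp (r * (0:ℝ)) * ‖x (t + 0)‖ ≤ crNorm d r (fun θ => x (t + θ)) :=
      le_ciSup hsegbdd ⟨0, Set.mem_Iic.mpr le_rfl⟩
    have : (0:ℝ) ≤ Real.exp (r * (0:ℝ)) * ‖x (t + 0)‖ := by positivity
    linarith
  have hBsq : B ^ 2 ≤ Real.exp (-(2*r)*t) * A ^ 2 + S := by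
    have ha : (Real.exp (-(r*t)) * A) ^ 2 = Real.exp (-(2*r)*t) * A ^ 2 := by
      rw [mul_pow, ← Real.exp_nat_mul]
      ring_nf
    have hb : (Real.sqrt S) ^ 2 = S := Real.sq_sqrt hSnonneg
    rcases max_cases (Real.exp (-(r*t)) * A) (Real.sqrt S) with ⟨h1, _⟩ | ⟨h1, _⟩
    · rw [hB, h1, ha]; nlinarith [Real.exp_pos (-(2*r)*t)]
    · rw [hB, h1, hb]
      have : 0 ≤ Real.exp (-(2*r)*t) * A ^ 2 := by positivity
      linarith
  calc crNorm d r (fun θ => x (t + θ)) ^ 2 ≤ B ^ 2 := by nlinarith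
    _ ≤ _ := hBsq
end
end
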